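/- Let ⦀·⦀ be an orthant-monotonic norm on ℝ^d with dual unit sphere S⋆ = {y : ⦀y⦀⋆ = 1}. Then for every k ∈ {1,…,d}: (i) for every x ∈ ℝ^d, the generalized top-k norm satisfies ⦀x⦀^top_k = sup over subsets K ⊆ {1,…,d} with |K| ≤ k of σ_{ℝ_K ∩ S⋆}(x); (ii) the unit ball of the generalized k-support norm equals the closed convex hull of the union, over subsets K ⊆ {1,…,d} with |K| ≤ k, of the sets ℝ_K ∩ S⋆. -/

import Mathlib

open Finset Set

namespace OSMPaper

variable {d : ℕ}

/-- Standard inner product on `ℝ^d = Fin d → ℝ`. -/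
def dot (x y : Fin d → ℝ) : ℝ := ∑ i, x i * y i

/-- `N` is a norm on `ℝ^d`. -/
def IsNorm (N : (Fin d → ℝ) → ℝ) : Prop :=
  (∀ x, 0 ≤ N x) ∧ (∀ x, N x = 0 ↔ x = 0) ∧
  (∀ (c : ℝ) (x : Fin d → ℝ), N (c • x) = |c| * N x) ∧
  (∀ x y, N (x + y) ≤ N x + N y)

/-- `proj K x = x_K`, the vector coinciding with `x` on `K` and zero outside `K`. -/
def proj (K : Finset (Fin d)) (x : Fin d → ℝ) : Fin d → ℝ :=
  fun i => if i ∈ K then x i else 0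

/-- The coordinate subspace `ℝ_K`. -/
def coordSubspace (K : Finset (Fin d)) : Set (Fin d → ℝ) :=
  {x | ∀ j, j ∉ K → x j = 0}

/-- Orthant-monotonic norm. -/
def OrthantMonotonic (N : (Fin d → ℝ) → ℝ) : Prop :=
  ∀ x x' : Fin d → ℝ, (∀ i, |x i| ≤ |x' i|) → (∀ i, 0 ≤ x i * x' i) → N x ≤ N x'

/-- Orthant-strictly monotonic norm. -/
def OrthantStrictlyMonotonic (N : (Fin d → ℝ) → ℝ) : Prop :=
  ∀ x x' : Fin d → ℝ, (∀ i, |x i| ≤ |x' i|) → (∃ j, |x j| < |x' j|) →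
    (∀ i, 0 ≤ x i * x' i) → N x < N x'

/-- Dual norm `⦀y⦀⋆ = sup_{N x ≤ 1} ⟨x, y⟩`. -/
noncomputable def dualNorm (N : (Fin d → ℝ) → ℝ) (y : Fin d → ℝ) : ℝ :=
  sSup {r | ∃ x, N x ≤ 1 ∧ r = dot x y}

/-- Support function of a set `S`. -/
noncomputable def suppFn (S : Set (Fin d → ℝ)) (y : Fin d → ℝ) : ℝ :=
  sSup {r | ∃ x ∈ S, r = dot x y}

/-- Generalized top-`k` norm associated with the source norm `N`. -/
noncomputable def topNorm (N : (Fin d → ℝ) → ℝ) (k : ℕ) (x : Fin d → ℝ) : ℝ :=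
  sSup {r | ∃ K : Finset (Fin d), K.card ≤ k ∧ r = N (proj K x)}

/-- Generalized `k`-support norm: the dual norm of the generalized top-`k` norm. -/
noncomputable def supportNorm (N : (Fin d → ℝ) → ℝ) (k : ℕ) : (Fin d → ℝ) → ℝ :=
  dualNorm (topNorm N k)

/-- The ℓ0 pseudonorm: the number of nonzero components. -/
noncomputable def l0 (x : Fin d → ℝ) : ℕ := Set.ncard {i | x i ≠ 0}

/-- `x` is an extreme point of the convex set `C`. -/
def ExtremePt (C : Set (Fin d → ℝ)) (x : Fin d → ℝ) : Prop :=
  x ∈ C ∧ ∀ y ∈ C, ∀ z ∈ C, ∀ t : ℝ, 0 < t → t < 1 →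
    x = t • y + (1 - t) • z → y = x ∧ z = x

/-! Orthant monotonicity gives `N (x_K) ≤ N x`, so projecting onto `ℝ_K` a Hahn–Banach
functional that norms `x_K` keeps its dual norm equal to one: `N (x_K) = σ_{ℝ_K ∩ S⋆}(x)`, with
the supremum attained, which is (i). Taking the supremum over `|K| ≤ k` identifies the top-`k`
norm with the support function of `A = ⋃_{|K| ≤ k} ℝ_K ∩ S⋆`. The unit ball of its dual norm
is therefore `{y | ⟨y, ·⟩ ≤ σ_A}`, the closed convex hull of `A` by the separation theorem. -/

section

variable {N : (Fin d → ℝ) → ℝ}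

theorem dot_eq_dotProduct (x y : Fin d → ℝ) : dot x y = x ⬝ᵥ y := rfl

theorem dot_comm (x y : Fin d → ℝ) : dot x y = dot y x := dotProduct_comm x y

theorem exists_apply_eq_dot (g : (Fin d → ℝ) →ₗ[ℝ] ℝ) : ∃ y, ∀ x, g x = dot x y :=
  ⟨_, fun x => by simpa [dot] using g.pi_apply_eq_sum_univ x⟩

theorem IsNorm.map_zero (hN : IsNorm N) : N 0 = 0 := (hN.2.1 0).2 rfl

theorem IsNorm.pos (hN : IsNorm N) {x : Fin d → ℝ} (hx : x ≠ 0) : 0 < N x :=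
  (hN.1 x).lt_of_ne fun h => hx ((hN.2.1 x).1 h.symm)

theorem IsNorm.map_neg (hN : IsNorm N) (x : Fin d → ℝ) : N (-x) = N x := by
  simpa using hN.2.2.1 (-1) x

theorem IsNorm.convexOn (hN : IsNorm N) : ConvexOn ℝ univ N := by
  refine ⟨convex_univ, fun x _ y _ a b ha hb _ => ?_⟩
  calc N (a • x + b • y) ≤ N (a • x) + N (b • y) := hN.2.2.2 _ _
    _ = a • N x + b • N y := by
      rw [hN.2.2.1, hN.2.2.1, abs_of_nonneg ha, abs_of_nonneg hb, smul_eq_mul, smul_eq_mul]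

theorem IsNorm.continuous (hN : IsNorm N) : Continuous N :=
  continuousOn_univ.1 (hN.convexOn.continuousOn isOpen_univ)

theorem IsNorm.exists_pos_mul_norm_le (hN : IsNorm N) :
    ∃ m > 0, ∀ x, m * ‖x‖ ≤ N x := by
  obtain ⟨m, hm, hmN⟩ := (isCompact_sphere (0 : Fin d → ℝ) 1).exists_forall_le'
    hN.continuous.continuousOn fun x hx => hN.pos (ne_zero_of_mem_sphere one_ne_zero ⟨x, hx⟩)
  refine ⟨m, hm, fun x => ?_⟩
  rcases eq_or_ne x 0 with rfl | hx
  · simp [hN.map_zero]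
  have hxpos : 0 < ‖x‖ := norm_pos_iff.2 hx
  have := hmN (‖x‖⁻¹ • x) (by simp [norm_smul, hxpos.ne'])
  rw [hN.2.2.1, abs_of_pos (inv_pos.2 hxpos), le_inv_mul_iff₀ hxpos] at this
  linarith

theorem IsNorm.bddAbove_dot (hN : IsNorm N) (y : Fin d → ℝ) :
    BddAbove {r | ∃ x, N x ≤ 1 ∧ r = dot x y} := by
  obtain ⟨m, hm, hmN⟩ := hN.exists_pos_mul_norm_le
  have hcont : Continuous fun x : Fin d → ℝ => dot x y :=
    continuous_id.dotProduct continuous_const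
  refine ((isCompact_closedBall (0 : Fin d → ℝ) (1 / m)).bddAbove_image
    hcont.continuousOn).mono ?_
  rintro _ ⟨x, hx, rfl⟩
  refine ⟨x, ?_, rfl⟩
  rw [mem_closedBall_zero_iff, le_div_iff₀' hm]
  exact (hmN x).trans hx

theorem IsNorm.dot_le_mul_dualNorm (hN : IsNorm N) (x y : Fin d → ℝ) :
    dot x y ≤ N x * dualNorm N y := by
  rcases eq_or_ne x 0 with rfl | hx
  · simp [dot_eq_dotProduct, hN.map_zero]
  have hNx := hN.pos hx
  have hmem : dot ((N x)⁻¹ • x) y ≤ dualNorm N y := by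
    refine le_csSup (hN.bddAbove_dot y) ⟨_, ?_, rfl⟩
    rw [hN.2.2.1, abs_of_pos (inv_pos.2 hNx), inv_mul_cancel₀ hNx.ne']
  rwa [dot_eq_dotProduct, smul_dotProduct, smul_eq_mul, inv_mul_le_iff₀ hNx] at hmem

theorem dualNorm_le_one_iff (hN : IsNorm N) (y : Fin d → ℝ) :
    dualNorm N y ≤ 1 ↔ ∀ x, dot x y ≤ N x := by
  refine ⟨fun hy x => ?_, fun hy => Real.sSup_le ?_ zero_le_one⟩
  · calc dot x y ≤ N x * dualNorm N y := hN.dot_le_mul_dualNorm x y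
      _ ≤ N x := mul_le_of_le_one_right (hN.1 x) hy
  · rintro _ ⟨x, hx, rfl⟩
    exact (hy x).trans hx

theorem dualNorm_neg (hN : IsNorm N) (y : Fin d → ℝ) : dualNorm N (-y) = dualNorm N y := by
  unfold dualNorm
  congr 1
  ext r
  refine ⟨fun ⟨x, hx, hr⟩ => ⟨-x, ?_, ?_⟩, fun ⟨x, hx, hr⟩ => ⟨-x, ?_, ?_⟩⟩ <;>
    simp_all [hN.map_neg, dot_eq_dotProduct]

theorem IsNorm.exists_dot_le_dot_eq (hN : IsNorm N) (z : Fin d → ℝ) :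
    ∃ y, (∀ x, dot x y ≤ N x) ∧ dot z y = N z := by
  rcases eq_or_ne z 0 with rfl | hz
  · exact ⟨0, fun x => by simpa [dot_eq_dotProduct] using hN.1 x,
      by simp [dot_eq_dotProduct, hN.map_zero]⟩
  obtain ⟨g, hgz, hgN⟩ := exists_extension_of_le_sublinear
    (LinearPMap.mkSpanSingleton (K := ℝ) z (N z) hz) N
    (fun c hc x => by rw [hN.2.2.1, abs_of_pos hc]) hN.2.2.2 (fun ⟨x, hx⟩ => by
      obtain ⟨c, rfl⟩ := Submodule.mem_span_singleton.1 hx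
      rw [LinearPMap.mkSpanSingleton'_apply, hN.2.2.1, smul_eq_mul]
      exact mul_le_mul_of_nonneg_right (le_abs_self c) (hN.1 z))
  obtain ⟨y, hy⟩ := exists_apply_eq_dot g
  refine ⟨y, fun x => hy x ▸ hgN x, ?_⟩
  rw [← hy, hgz ⟨z, Submodule.mem_span_singleton_self z⟩]
  exact LinearPMap.mkSpanSingleton_apply ℝ ℝ hz _

theorem proj_mem (K : Finset (Fin d)) (x : Fin d → ℝ) : proj K x ∈ coordSubspace K :=
  fun _ hj => if_neg hj

theorem proj_eq_self {K : Finset (Fin d)} {v : Fin d → ℝ} (hv : v ∈ coordSubspace K) :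
    proj K v = v := by
  ext i
  by_cases hi : i ∈ K <;> simp [proj, hi, hv i]

theorem proj_add (K : Finset (Fin d)) (x y : Fin d → ℝ) :
    proj K (x + y) = proj K x + proj K y := by
  ext i
  by_cases hi : i ∈ K <;> simp [proj, hi]

theorem proj_smul (K : Finset (Fin d)) (c : ℝ) (x : Fin d → ℝ) :
    proj K (c • x) = c • proj K x := by
  ext i
  by_cases hi : i ∈ K <;> simp [proj, hi]

theorem proj_singleton_apply_self (i : Fin d) (x : Fin d → ℝ) : proj {i} x i = x i := by
  simp [proj]

theorem dot_proj_left (K : Finset (Fin d)) (x y : Fin d → ℝ) :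
    dot (proj K x) y = dot x (proj K y) := by
  refine Finset.sum_congr rfl fun i _ => ?_
  by_cases hi : i ∈ K <;> simp [proj, hi]

theorem OrthantMonotonic.apply_proj_le (hom : OrthantMonotonic N) (K : Finset (Fin d))
    (x : Fin d → ℝ) : N (proj K x) ≤ N x :=
  hom _ _ (fun i => by by_cases hi : i ∈ K <;> simp [proj, hi])
    (fun i => by by_cases hi : i ∈ K <;> simp [proj, hi, mul_self_nonneg])

variable {K : Finset (Fin d)}

theorem dot_le_apply_proj (hN : IsNorm N) {v : Fin d → ℝ}
    (hv : v ∈ coordSubspace K ∩ {y | dualNorm N y = 1}) (x : Fin d → ℝ) :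
    dot v x ≤ N (proj K x) := by
  calc dot v x = dot (proj K x) v := by
        rw [← proj_eq_self hv.1, dot_proj_left, proj_eq_self hv.1, dot_comm]
    _ ≤ N (proj K x) * dualNorm N v := hN.dot_le_mul_dualNorm _ _
    _ = N (proj K x) := by rw [hv.2, mul_one]

theorem exists_dot_eq_apply_proj (hN : IsNorm N) (hom : OrthantMonotonic N) {x : Fin d → ℝ}
    (hx : proj K x ≠ 0) :
    ∃ v ∈ coordSubspace K ∩ {y | dualNorm N y = 1}, dot v x = N (proj K x) := by
  obtain ⟨y, hyN, hyx⟩ := hN.exists_dot_le_dot_eq (proj K x)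
  have hdot : ∀ w, dot w (proj K y) = dot (proj K w) y := fun w => (dot_proj_left K w y).symm
  have hle : dualNorm N (proj K y) ≤ 1 := (dualNorm_le_one_iff hN _).2 fun w =>
    (hdot w).trans_le ((hyN _).trans (hom.apply_proj_le K w))
  have hge : N (proj K x) * 1 ≤ N (proj K x) * dualNorm N (proj K y) := by
    rw [mul_one]
    calc N (proj K x) = dot (proj K x) (proj K y) := by
          rw [hdot, proj_eq_self (proj_mem K x), hyx]
      _ ≤ _ := hN.dot_le_mul_dualNorm _ _
  refine ⟨proj K y, ⟨proj_mem K y, le_antisymm hle (le_of_mul_le_mul_left hge (hN.pos hx))⟩, ?_⟩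
  rw [dot_proj_left, dot_comm, hyx]

theorem apply_proj_eq_suppFn (hN : IsNorm N) (hom : OrthantMonotonic N) (K : Finset (Fin d))
    (x : Fin d → ℝ) :
    N (proj K x) = suppFn (coordSubspace K ∩ {y | dualNorm N y = 1}) x := by
  have hub : ∀ r ∈ {r | ∃ v ∈ coordSubspace K ∩ {y | dualNorm N y = 1}, r = dot v x},
      r ≤ N (proj K x) := by
    rintro _ ⟨v, hv, rfl⟩
    exact dot_le_apply_proj hN hv x
  refine le_antisymm ?_ (Real.sSup_le hub (hN.1 _))
  rcases eq_or_ne (proj K x) 0 with hx | hx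
  · rw [hx, hN.map_zero]
    refine Real.sSup_nonneg fun _ ⟨v, hv, hr⟩ => ?_
    rw [hr, ← proj_eq_self hv.1, dot_proj_left, hx, dot_eq_dotProduct, dotProduct_zero]
  · obtain ⟨v, hv, hvx⟩ := exists_dot_eq_apply_proj hN hom hx
    exact le_csSup ⟨_, hub⟩ ⟨v, hv, hvx.symm⟩

theorem le_topNorm {k : ℕ} (hK : K.card ≤ k) (x : Fin d → ℝ) :
    N (proj K x) ≤ topNorm N k x := by
  refine le_csSup ((Set.finite_range fun K => N (proj K x)).subset ?_).bddAbove ⟨K, hK, rfl⟩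
  rintro _ ⟨K, -, rfl⟩
  exact ⟨K, rfl⟩

theorem isNorm_topNorm (hN : IsNorm N) {k : ℕ} (hk : 1 ≤ k) : IsNorm (topNorm N k) := by
  have hnonneg : ∀ x, 0 ≤ topNorm N k x := fun x =>
    (hN.1 _).trans (le_topNorm (K := ∅) (Nat.zero_le k) x)
  have hsmul_le : ∀ (c : ℝ) x, topNorm N k (c • x) ≤ |c| * topNorm N k x := fun c x =>
    Real.sSup_le (fun _ ⟨K, hK, hr⟩ => by
      rw [hr, proj_smul, hN.2.2.1]
      exact mul_le_mul_of_nonneg_left (le_topNorm hK x) (abs_nonneg c))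
      (mul_nonneg (abs_nonneg c) (hnonneg x))
  refine ⟨hnonneg, fun x => ⟨fun hx => ?_, ?_⟩, fun c x => ?_, fun x y => ?_⟩
  · ext i
    have hi : N (proj {i} x) ≤ 0 := hx ▸ le_topNorm (by simpa using hk) x
    rw [← proj_singleton_apply_self i x, (hN.2.1 _).1 (hi.antisymm (hN.1 _))]
  · rintro rfl
    exact le_antisymm (by simpa using hsmul_le 0 0) (hnonneg 0)
  · refine (hsmul_le c x).antisymm ?_
    rcases eq_or_ne c 0 with rfl | hc
    · simpa using hnonneg _
    calc |c| * topNorm N k x = |c| * topNorm N k (c⁻¹ • c • x) := by rw [inv_smul_smul₀ hc]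
      _ ≤ |c| * (|c⁻¹| * topNorm N k (c • x)) :=
        mul_le_mul_of_nonneg_left (hsmul_le _ _) (abs_nonneg c)
      _ = topNorm N k (c • x) := by
        rw [abs_inv, ← mul_assoc, mul_inv_cancel₀ (abs_ne_zero.2 hc), one_mul]
  · refine Real.sSup_le (fun _ ⟨K, hK, hr⟩ => ?_) (add_nonneg (hnonneg x) (hnonneg y))
    rw [hr, proj_add]
    exact (hN.2.2.2 _ _).trans (add_le_add (le_topNorm hK x) (le_topNorm hK y))

theorem closure_convexHull_eq_setOf_dot_le_suppFn {A : Set (Fin d → ℝ)} (hA : A.Nonempty)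
    (hbdd : ∀ x, BddAbove {r | ∃ v ∈ A, r = dot v x}) :
    closure (convexHull ℝ A) = {y | ∀ x, dot y x ≤ suppFn A x} := by
  ext y
  refine ⟨fun hy x => ?_, fun hy => ?_⟩
  · have hcont : Continuous fun w : Fin d → ℝ => dot w x :=
      continuous_id.dotProduct continuous_const
    refine closure_minimal (convexHull_min (fun v hv => le_csSup (hbdd x) ⟨v, hv, rfl⟩) ?_)
      (isClosed_le hcont continuous_const) hy
    exact convex_halfSpace_le ((dotProductBilin ℝ ℝ).flip x).isLinear _
  · by_contra hy'
    obtain ⟨f, u, hfA, hfy⟩ := geometric_hahn_banach_closed_point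
      (convex_convexHull ℝ A).closure isClosed_closure hy'
    obtain ⟨x, hx⟩ := exists_apply_eq_dot f.toLinearMap
    obtain ⟨v₀, hv₀⟩ := hA
    have hsupp : suppFn A x ≤ u := csSup_le ⟨_, v₀, hv₀, rfl⟩ fun _ ⟨v, hv, hr⟩ =>
      hr ▸ (hx v).symm ▸ (hfA v (subset_closure (subset_convexHull ℝ A hv))).le
    exact (hfy.trans_le ((hx y).trans_le (hy x))).not_ge hsupp

variable (N) in
def sparseDualSphere (k : ℕ) : Set (Fin d → ℝ) :=
  ⋃ (K : Finset (Fin d)) (_ : K.card ≤ k), coordSubspace K ∩ {y | dualNorm N y = 1}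

variable {k : ℕ} {v : Fin d → ℝ}

theorem mem_sparseDualSphere : v ∈ sparseDualSphere N k ↔
    ∃ K : Finset (Fin d), K.card ≤ k ∧ v ∈ coordSubspace K ∩ {y | dualNorm N y = 1} := by
  simp only [sparseDualSphere, Set.mem_iUnion, exists_prop]

theorem neg_mem_sparseDualSphere (hN : IsNorm N) (hv : v ∈ sparseDualSphere N k) :
    -v ∈ sparseDualSphere N k := by
  obtain ⟨K, hK, hvK, hv1⟩ := mem_sparseDualSphere.1 hv
  exact mem_sparseDualSphere.2
    ⟨K, hK, fun j hj => by simp [hvK j hj], (dualNorm_neg hN v).trans hv1⟩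

theorem sparseDualSphere_nonempty (hd : 0 < d) (hN : IsNorm N) (hom : OrthantMonotonic N)
    (hk : 1 ≤ k) : (sparseDualSphere N k).Nonempty := by
  let i : Fin d := ⟨0, hd⟩
  have hx : proj {i} (fun _ => 1) ≠ 0 := fun h => by
    simpa [proj_singleton_apply_self] using congrFun h i
  obtain ⟨v, hv, -⟩ := exists_dot_eq_apply_proj hN hom hx
  exact ⟨v, mem_sparseDualSphere.2 ⟨{i}, by simpa using hk, hv⟩⟩

theorem dot_le_topNorm_of_mem_sparseDualSphere (hN : IsNorm N) (hv : v ∈ sparseDualSphere N k)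
    (x : Fin d → ℝ) : dot v x ≤ topNorm N k x := by
  obtain ⟨K, hK, hvK⟩ := mem_sparseDualSphere.1 hv
  exact (dot_le_apply_proj hN hvK x).trans (le_topNorm hK x)

theorem bddAbove_dot_sparseDualSphere (hN : IsNorm N) (x : Fin d → ℝ) :
    BddAbove {r | ∃ v ∈ sparseDualSphere N k, r = dot v x} :=
  ⟨topNorm N k x, fun _ ⟨_, hv, hr⟩ => hr ▸ dot_le_topNorm_of_mem_sparseDualSphere hN hv x⟩

theorem suppFn_sparseDualSphere (hd : 0 < d) (hN : IsNorm N) (hom : OrthantMonotonic N)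
    (hk : 1 ≤ k) (x : Fin d → ℝ) : suppFn (sparseDualSphere N k) x = topNorm N k x := by
  obtain ⟨v₀, hv₀⟩ := sparseDualSphere_nonempty hd hN hom hk
  have hle : ∀ v ∈ sparseDualSphere N k, dot v x ≤ suppFn (sparseDualSphere N k) x :=
    fun v hv => le_csSup (bddAbove_dot_sparseDualSphere hN x) ⟨v, hv, rfl⟩
  refine le_antisymm (csSup_le ⟨_, v₀, hv₀, rfl⟩ fun _ ⟨v, hv, hr⟩ =>
    hr ▸ dot_le_topNorm_of_mem_sparseDualSphere hN hv x) ?_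
  have hnonneg : 0 ≤ suppFn (sparseDualSphere N k) x := by
    have h₁ := hle v₀ hv₀
    have h₂ := hle _ (neg_mem_sparseDualSphere hN hv₀)
    rw [dot_eq_dotProduct] at h₁ h₂
    rw [neg_dotProduct] at h₂
    linarith
  refine Real.sSup_le (fun _ ⟨K, hK, hr⟩ => hr ▸ ?_) hnonneg
  rcases eq_or_ne (proj K x) 0 with hx | hx
  · rwa [hx, hN.map_zero]
  · obtain ⟨v, hv, hvx⟩ := exists_dot_eq_apply_proj hN hom hx
    exact hvx ▸ hle v (mem_sparseDualSphere.2 ⟨K, hK, hv⟩)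

end

theorem topNorm_and_supportNorm_of_orthantMonotonic_general
    (hd : 0 < d) (N : (Fin d → ℝ) → ℝ) (hN : IsNorm N)
    (hom : OrthantMonotonic N) (k : ℕ) (hk1 : 1 ≤ k) :
    (∀ x : Fin d → ℝ,
      topNorm N k x =
        sSup {r | ∃ K : Finset (Fin d), K.card ≤ k ∧
          r = suppFn (coordSubspace K ∩ {y | dualNorm N y = 1}) x}) ∧
    {y : Fin d → ℝ | supportNorm N k y ≤ 1} =
      closure (convexHull ℝ
        (⋃ (K : Finset (Fin d)) (_ : K.card ≤ k),
          coordSubspace K ∩ {y : Fin d → ℝ | dualNorm N y = 1})) := by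
  refine ⟨fun x => by simp only [topNorm, apply_proj_eq_suppFn hN hom], ?_⟩
  change _ = closure (convexHull ℝ (sparseDualSphere N k))
  rw [closure_convexHull_eq_setOf_dot_le_suppFn (sparseDualSphere_nonempty hd hN hom hk1)
    (bddAbove_dot_sparseDualSphere hN)]
  ext y
  simp only [Set.mem_ofPred_eq, supportNorm, dualNorm_le_one_iff (isNorm_topNorm hN hk1),
    suppFn_sparseDualSphere hd hN hom hk1, dot_comm]

/-- for an orthant-monotonic source norm, (i) the generalized
top-k norm equals the sup over `|K| ≤ k` of the support functions of
`ℝ_K ∩ S⋆`, and (ii) the unit ball of the generalized k-support norm is the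
closed convex hull of the union of the sets `ℝ_K ∩ S⋆` over `|K| ≤ k`. -/
theorem topNorm_and_supportNorm_of_orthantMonotonic
    (hd : 0 < d) (N : (Fin d → ℝ) → ℝ) (hN : IsNorm N)
    (hom : OrthantMonotonic N) (k : ℕ) (hk1 : 1 ≤ k) (hkd : k ≤ d) :
    (∀ x : Fin d → ℝ,
      topNorm N k x =
        sSup {r | ∃ K : Finset (Fin d), K.card ≤ k ∧
          r = suppFn (coordSubspace K ∩ {y | dualNorm N y = 1}) x}) ∧
    {y : Fin d → ℝ | supportNorm N k y ≤ 1} =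
      closure (convexHull ℝ
        (⋃ (K : Finset (Fin d)) (_ : K.card ≤ k),
          coordSubspace K ∩ {y : Fin d → ℝ | dualNorm N y = 1})) :=
  topNorm_and_supportNorm_of_orthantMonotonic_general hd N hN hom k hk1

end OSMPaper
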